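/- Let M be a stochastic MDP over (S, A) with initial distribution μ, transition kernels P_h, and reward distributions R(s, a), and let π be any policy. Sample a random deterministic MDP (a 'trajectory tree') as follows: draw a start state ŝ_1 ∼ μ, and independently for every pair (s, a) with s ∈ S_h and h < H draw a next state ŝ(s, a) ∼ P_h(· | s, a), and independently for every pair (s, a) with s ∈ S draw a reward r̂(s, a) ∼ R(s, a). Let v̂^π = Σ_{h=1}^H r̂(s_h, π(s_h)) be the cumulative reward of π along the deterministic trajectory with s_1 = ŝ_1 and s_{h+1} = ŝ(s_h, π(s_h)). Then E[v̂^π] = V^π, i.e., the trajectory-tree estimate is an unbiased estimate of the value of π in M. -/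

import Mathlib

open MeasureTheory
open scoped ENNReal

/-- A stochastic MDP over a layered state space `S : ℕ → Type` with action set `A` and
stochastic rewards: an initial distribution on layer `0`, transition kernels between
consecutive layers, and a reward distribution (a measure on `ℝ`, supported on `[0,1]`)
for every state-action pair. -/
structure StoMDPR (S : ℕ → Type) (A : Type) where
  init : PMF (S 0)
  step : ∀ h : ℕ, S h → A → PMF (S (h + 1))
  reward : ∀ h : ℕ, S h → A → Measure ℝ

/-- `stateProbR init step π h s` is the probability (as a real number) that the Markov chain
`s_0 ∼ init`, `s_{h+1} ∼ step h s_h (π h s_h)` is at state `s` at layer `h`. -/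
noncomputable def stateProbR {S : ℕ → Type} {A : Type} [∀ h, Fintype (S h)]
    (init : PMF (S 0)) (step : ∀ h : ℕ, S h → A → PMF (S (h + 1)))
    (π : ∀ h : ℕ, S h → A) : ∀ h : ℕ, S h → ℝ
  | 0 => fun s => (init s).toReal
  | h + 1 => fun s' =>
      ∑ s : S h, stateProbR init step π h s * (step h s (π h s) s').toReal

/-- The deterministic trajectory through a sampled trajectory tree: `s_0` is the sampled
start state and `s_{h+1} = T(s_h, π(s_h))`, where `T` is the table of sampled next states
(one for every layer `h < H - 1` and state-action pair of that layer). -/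
noncomputable def treeTraj (H : ℕ) {S : ℕ → Type} {A : Type} [∀ h, Nonempty (S h)]
    (s0 : S 0) (T : ∀ q : (h : Fin (H - 1)) × (S h.1 × A), S (q.1.1 + 1))
    (π : ∀ h : ℕ, S h → A) : ∀ h : ℕ, S h
  | 0 => s0
  | h + 1 =>
      if hh : h < H - 1 then
        T ⟨⟨h, hh⟩, (treeTraj H s0 T π h, π h (treeTraj H s0 T π h))⟩
      else Classical.arbitrary (S (h + 1))

/-- The trajectory-tree estimate `v̂^π = Σ_{h<H} r̂(s_h, π(s_h))`: the cumulative sampled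
reward of the policy `π` along its deterministic trajectory in the sampled trajectory
tree, where `r` is the table of sampled rewards (one for every layer `h < H` and
state-action pair of that layer). -/
noncomputable def treeValue (H : ℕ) {S : ℕ → Type} {A : Type} [∀ h, Nonempty (S h)]
    (s0 : S 0) (T : ∀ q : (h : Fin (H - 1)) × (S h.1 × A), S (q.1.1 + 1))
    (r : ((h : Fin H) × (S h.1 × A)) → ℝ) (π : ∀ h : ℕ, S h → A) : ℝ :=
  ∑ h : Fin H, r ⟨h, (treeTraj H s0 T π h.1, π h.1 (treeTraj H s0 T π h.1))⟩

/-- The value `V^π = E^π[Σ_{h<H} r_h] = Σ_{h<H} Σ_{s ∈ S_h} Pr^π[s_h = s]·E[R(s, π(s))]`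
of the policy `π` in the stochastic MDP `M` with horizon `H`. -/
noncomputable def valueOf (H : ℕ) {S : ℕ → Type} {A : Type} [∀ h, Fintype (S h)]
    (M : StoMDPR S A) (π : ∀ h : ℕ, S h → A) : ℝ :=
  ∑ h : Fin H, ∑ s : S h.1,
    stateProbR M.init M.step π h.1 s * ∫ x, x ∂(M.reward h.1 s (π h.1 s))

/-! The state `s_h` of the trajectory is determined by the table entries of the layers below `h`,
and these are independent of the entries of layer `h`. So, given `s_h = s'`, the next state
`ŝ(s', π s')` is still distributed as `P_h(· | s', π s')`, and by induction `s_h` has the law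
`Pr^π[s_h = ·]` of the Markov chain. The reward table is independent of the transition table,
so by Fubini the `h`-th reward has expectation `Σ_s Pr^π[s_h = s] · E[R(s, π s)]`. -/

open ProbabilityTheory

theorem MeasureTheory.Measure.pi_inter_eval_preimage_of_update_mem {ι : Type*} [Fintype ι]
    [DecidableEq ι] {κ : ι → Type*} [∀ i, MeasurableSpace (κ i)] (μ : ∀ i, Measure (κ i))
    [∀ i, IsProbabilityMeasure (μ i)] {q : ι} {E : Set (∀ i, κ i)} (hE : MeasurableSet E)
    (hEq : ∀ T t, Function.update T q t ∈ E ↔ T ∈ E) {B : Set (κ q)} (hB : MeasurableSet B) :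
    Measure.pi μ (E ∩ Function.eval q ⁻¹' B) = Measure.pi μ E * μ q B := by
  have c : ∀ i, κ i := fun i => (nonempty_of_isProbabilityMeasure (μ i)).some
  set R : Finset ι := Finset.univ.erase q
  have hind : IndepFun (fun T (i : R) => T i) (fun T (i : ({q} : Finset ι)) => T i)
      (Measure.pi μ) :=
    (iIndepFun_pi (X := fun _ => id) fun _ => aemeasurable_id).indepFun_finset R {q}
      (by simp [R]) fun i => measurable_pi_apply i
  let extend : (∀ i : R, κ i) → ∀ i, κ i := fun y i =>
    if h : i = q then c i else y ⟨i, by simp [R, h]⟩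
  have hextend : Measurable extend := by
    refine measurable_pi_lambda _ fun i => ?_
    by_cases h : i = q
    · simp only [extend, h, dif_pos]; exact measurable_const
    · simp only [extend, h, dif_neg, not_false_eq_true]; exact measurable_pi_apply _
  -- `E` only sees the coordinates other than `q`, so it is a preimage under the restriction to `R`.
  have hE_restrict : E = (fun T (i : R) => T i) ⁻¹' (extend ⁻¹' E) := by
    ext T
    have : extend (fun i : R => T i) = Function.update T q (c q) := by
      funext i
      by_cases h : i = q
      · subst h; simp [extend]
      · simp [extend, h]
    simp [this, hEq]
  rw [← (measurePreserving_eval μ q).measure_preimage hB.nullMeasurableSet, hE_restrict]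
  exact hind.measure_inter_preimage_eq_mul _ ((fun y => y ⟨q, Finset.mem_singleton_self q⟩) ⁻¹' B)
    (hextend hE) ((measurable_pi_apply _) hB)

theorem MeasureTheory.Measure.prod_pi_inter_eval_preimage_of_update_mem {α ι : Type*}
    [MeasurableSpace α] [Fintype ι] [DecidableEq ι] {κ : ι → Type*} [∀ i, MeasurableSpace (κ i)]
    (ν : Measure α) [SFinite ν] (μ : ∀ i, Measure (κ i)) [∀ i, IsProbabilityMeasure (μ i)] {q : ι}
    {E : Set (α × ∀ i, κ i)} (hE : MeasurableSet E)
    (hEq : ∀ a T t, (a, Function.update T q t) ∈ E ↔ (a, T) ∈ E) {B : Set (κ q)}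
    (hB : MeasurableSet B) :
    ν.prod (Measure.pi μ) (E ∩ {x | x.2 q ∈ B}) = ν.prod (Measure.pi μ) E * μ q B := by
  have hqB : MeasurableSet {x : α × ∀ i, κ i | x.2 q ∈ B} :=
    ((measurable_pi_apply q).comp measurable_snd) hB
  rw [Measure.prod_apply (hE.inter hqB), Measure.prod_apply hE, ← lintegral_mul_const _
    (measurable_measure_prodMk_left hE)]
  exact lintegral_congr fun a =>
    Measure.pi_inter_eval_preimage_of_update_mem μ (measurable_prodMk_left hE) (hEq a) hB

theorem sum_measureReal_preimage_singleton_inter {Ω β : Type*} [MeasurableSpace Ω] [Fintype β]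
    {ν : Measure Ω} [IsFiniteMeasure ν] {X : Ω → β} (hX : ∀ b, MeasurableSet (X ⁻¹' {b}))
    (F : Set Ω) :
    ∑ b, ν.real (X ⁻¹' {b} ∩ F) = ν.real F := by
  rw [← measureReal_restrict_apply_univ, ← Set.preimage_univ (f := X), ← Finset.coe_univ,
    ← sum_measureReal_preimage_singleton _ fun b _ => hX b]
  simp only [measureReal_restrict_apply (hX _)]

theorem integral_comp_eq_sum_measureReal_preimage {Ω β : Type*} [MeasurableSpace Ω] [Fintype β]
    [MeasurableSpace β] [MeasurableSingletonClass β] {ν : Measure Ω} [IsFiniteMeasure ν]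
    {X : Ω → β} (hX : Measurable X) (φ : β → ℝ) :
    ∫ ω, φ (X ω) ∂ν = ∑ b, ν.real (X ⁻¹' {b}) * φ b := by
  rw [← integral_map hX.aemeasurable (.of_discrete), integral_fintype (.of_finite)]
  simp [map_measureReal_apply hX (measurableSet_singleton _)]

theorem integrable_id_of_measure_compl_Icc_eq_zero {μ : Measure ℝ} [IsFiniteMeasure μ] {a b : ℝ}
    (h : μ (Set.Icc a b)ᶜ = 0) : Integrable id μ := by
  refine .of_bound aestronglyMeasurable_id (max |a| |b|) ?_
  filter_upwards [mem_ae_iff.2 h] with x hx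
  exact abs_le_max_abs_abs hx.1 hx.2

theorem integrable_prod_pi_eval {α ι : Type*} [MeasurableSpace α] [Finite α]
    [MeasurableSingletonClass α] [Fintype ι] (ν : Measure α) [IsFiniteMeasure ν]
    {μ : ι → Measure ℝ} [∀ i, IsProbabilityMeasure (μ i)] (hμ : ∀ i, Integrable id (μ i))
    (k : α → ι) :
    Integrable (fun ω : α × (ι → ℝ) => ω.2 (k ω.1)) (ν.prod (Measure.pi μ)) := by
  have hmeas : Measurable fun ω : α × (ι → ℝ) => ω.2 (k ω.1) :=
    measurable_from_prod_countable_right fun a => measurable_pi_apply (k a)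
  refine (integrable_prod_iff hmeas.aestronglyMeasurable).2
    ⟨ae_of_all _ fun a => integrable_eval (i := k a) (hμ (k a)), .of_finite⟩

theorem integral_prod_pi_eval {α ι : Type*} [MeasurableSpace α] [Finite α]
    [MeasurableSingletonClass α] [Fintype ι] (ν : Measure α) [IsFiniteMeasure ν]
    {μ : ι → Measure ℝ} [∀ i, IsProbabilityMeasure (μ i)] (hμ : ∀ i, Integrable id (μ i))
    (k : α → ι) :
    ∫ ω : α × (ι → ℝ), ω.2 (k ω.1) ∂ν.prod (Measure.pi μ) = ∫ a, ∫ y, y ∂μ (k a) ∂ν := by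
  rw [integral_prod _ (integrable_prod_pi_eval ν hμ k)]
  refine integral_congr_ae (ae_of_all _ fun a => ?_)
  exact integral_eval (i := k a) (X := fun _ => ℝ)

section TrajectoryTree

abbrev TreeTable (H : ℕ) (S : ℕ → Type) (A : Type) : Type :=
  ∀ q : (h : Fin (H - 1)) × (S h.1 × A), S (q.1.1 + 1)

variable {H : ℕ} {S : ℕ → Type} {A : Type}

theorem treeTraj_succ [∀ h, Nonempty (S h)] (s0 : S 0) (T : TreeTable H S A)
    (π : ∀ h : ℕ, S h → A) {h : ℕ} (hh : h < H - 1) :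
    treeTraj H s0 T π (h + 1)
      = T ⟨⟨h, hh⟩, (treeTraj H s0 T π h, π h (treeTraj H s0 T π h))⟩ := by
  rw [treeTraj, dif_pos hh]

theorem treeTraj_update_of_le [∀ h, Nonempty (S h)]
    [DecidableEq ((h : Fin (H - 1)) × (S h.1 × A))] (s0 : S 0) (T : TreeTable H S A)
    (π : ∀ h : ℕ, S h → A) {h : ℕ}
    {q : (h : Fin (H - 1)) × (S h.1 × A)} (hq : h ≤ q.1.1) (t : S (q.1.1 + 1)) :
    treeTraj H s0 (Function.update T q t) π h = treeTraj H s0 T π h := by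
  induction h with
  | zero => rfl
  | succ h ih =>
    by_cases hh : h < H - 1
    · rw [treeTraj_succ _ _ _ hh, treeTraj_succ _ _ _ hh, ih (by omega),
        Function.update_of_ne fun hq' => by subst hq'; simp at hq]
    · rw [treeTraj, treeTraj, dif_neg hh, dif_neg hh]

variable [∀ h, Fintype (S h)] [∀ h, MeasurableSpace (S h)] [∀ h, MeasurableSingletonClass (S h)]
  [Fintype A]

noncomputable def treeLaw (H : ℕ) (M : StoMDPR S A) : Measure (S 0 × TreeTable H S A) :=
  M.init.toMeasure.prod
    (Measure.pi fun q : (h : Fin (H - 1)) × (S h.1 × A) => (M.step q.1.1 q.2.1 q.2.2).toMeasure)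

instance (M : StoMDPR S A) : IsProbabilityMeasure (treeLaw H M) := by
  unfold treeLaw; infer_instance

variable [∀ h, Nonempty (S h)]

theorem treeLaw_real_treeTraj_eq (M : StoMDPR S A) (π : ∀ h : ℕ, S h → A) :
    ∀ h < H, ∀ s : S h,
      (treeLaw H M).real {x | treeTraj H x.1 x.2 π h = s} = stateProbR M.init M.step π h s
  | 0, _, s => by
    have hfst : {x : S 0 × TreeTable H S A | treeTraj H x.1 x.2 π 0 = s} = {s} ×ˢ Set.univ := by
      ext x; simp [treeTraj]
    rw [hfst, measureReal_def, treeLaw, Measure.prod_prod, measure_univ, mul_one,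
      PMF.toMeasure_apply_singleton _ _ (measurableSet_singleton s)]
    rfl
  | h + 1, hh, s => by
    classical
    have hh' : h < H - 1 := by omega
    set X : S 0 × TreeTable H S A → S h := fun x => treeTraj H x.1 x.2 π h
    set F := {x : S 0 × TreeTable H S A | treeTraj H x.1 x.2 π (h + 1) = s}
    have hfiber : ∀ s', X ⁻¹' {s'} ∩ F
        = X ⁻¹' {s'} ∩ {x | x.2 ⟨⟨h, hh'⟩, (s', π h s')⟩ ∈ ({s} : Set (S (h + 1)))} := by
      intro s'
      ext x
      simp only [Set.mem_inter_iff, Set.mem_preimage, Set.mem_singleton_iff, Set.mem_ofPred_eq,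
        F, treeTraj_succ _ _ _ hh']
      constructor <;> rintro ⟨hx, hs⟩ <;> refine ⟨hx, ?_⟩
      · rwa [← hx]
      · rwa [← hx] at hs
    calc (treeLaw H M).real F
        = ∑ s', (treeLaw H M).real (X ⁻¹' {s'} ∩ F) :=
          (sum_measureReal_preimage_singleton_inter (fun _ => .of_discrete) F).symm
      _ = ∑ s', (treeLaw H M).real (X ⁻¹' {s'}) * (M.step h s' (π h s') s).toReal := by
          refine Finset.sum_congr rfl fun s' _ => ?_
          set q : (h : Fin (H - 1)) × (S h.1 × A) := ⟨⟨h, hh'⟩, (s', π h s')⟩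
          have hinv : ∀ a T t, (a, Function.update T q t) ∈ X ⁻¹' {s'} ↔ (a, T) ∈ X ⁻¹' {s'} := by
            intro a T t
            simp only [Set.mem_preimage, X]
            rw [treeTraj_update_of_le a T π (q := q) le_rfl t]
          simp only [hfiber, measureReal_def, treeLaw]
          rw [Measure.prod_pi_inter_eval_preimage_of_update_mem (E := X ⁻¹' {s'}) _ _ .of_discrete
            hinv (measurableSet_singleton s), ENNReal.toReal_mul,
            PMF.toMeasure_apply_singleton _ _ (measurableSet_singleton s)]
      _ = ∑ s', stateProbR M.init M.step π h s' * (M.step h s' (π h s') s).toReal :=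
          Finset.sum_congr rfl fun s' _ =>
            congrArg (· * _) (treeLaw_real_treeTraj_eq M π h (by omega) s')
      _ = stateProbR M.init M.step π (h + 1) s := rfl

theorem integral_comp_treeTraj (M : StoMDPR S A) (π : ∀ h : ℕ, S h → A) {h : ℕ} (hh : h < H)
    (φ : S h → ℝ) :
    ∫ x, φ (treeTraj H x.1 x.2 π h) ∂treeLaw H M = ∑ s, stateProbR M.init M.step π h s * φ s := by
  rw [integral_comp_eq_sum_measureReal_preimage .of_discrete]
  exact Finset.sum_congr rfl fun s _ => congrArg (· * φ s) (treeLaw_real_treeTraj_eq M π h hh s)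

end TrajectoryTree

theorem trajectoryTree_unbiased_general (H : ℕ) (S : ℕ → Type) (A : Type)
    [∀ h, Fintype (S h)] [∀ h, Nonempty (S h)] [∀ h, MeasurableSpace (S h)]
    [∀ h, MeasurableSingletonClass (S h)] [Fintype A]
    (M : StoMDPR S A)
    [hprob : ∀ (h : ℕ) (s : S h) (a : A), IsProbabilityMeasure (M.reward h s a)]
    (hsupp : ∀ (h : ℕ) (s : S h) (a : A), (M.reward h s a) (Set.Icc (0 : ℝ) 1)ᶜ = 0)
    (π : ∀ h : ℕ, S h → A) :
    ∫ ω : (S 0 × (∀ q : (h : Fin (H - 1)) × (S h.1 × A), S (q.1.1 + 1)))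
            × (((h : Fin H) × (S h.1 × A)) → ℝ),
        treeValue H ω.1.1 ω.1.2 ω.2 π
      ∂((M.init.toMeasure.prod
            (Measure.pi fun q : (h : Fin (H - 1)) × (S h.1 × A) =>
              (M.step q.1.1 q.2.1 q.2.2).toMeasure)).prod
          (Measure.pi fun q : (h : Fin H) × (S h.1 × A) =>
            M.reward q.1.1 q.2.1 q.2.2)) =
      valueOf H M π := by
  have hreward (q : (h : Fin H) × (S h.1 × A)) : Integrable id (M.reward q.1.1 q.2.1 q.2.2) :=
    integrable_id_of_measure_compl_Icc_eq_zero (hsupp _ _ _)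
  let visited (h : Fin H) (x : S 0 × TreeTable H S A) : (h : Fin H) × (S h.1 × A) :=
    ⟨h, (treeTraj H x.1 x.2 π h, π h (treeTraj H x.1 x.2 π h))⟩
  calc _ = ∑ h : Fin H, ∫ ω, ω.2 (visited h ω.1) ∂(treeLaw H M).prod
          (Measure.pi fun q : (h : Fin H) × (S h.1 × A) => M.reward q.1.1 q.2.1 q.2.2) :=
        integral_finsetSum _ fun h _ => integrable_prod_pi_eval _ hreward (visited h)
    _ = ∑ h : Fin H, ∫ x, (∫ y, y ∂M.reward h (treeTraj H x.1 x.2 π h)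
          (π h (treeTraj H x.1 x.2 π h))) ∂treeLaw H M :=
        Finset.sum_congr rfl fun h _ => integral_prod_pi_eval _ hreward (visited h)
    _ = valueOf H M π := Finset.sum_congr rfl fun h _ =>
        integral_comp_treeTraj M π h.2 fun s => ∫ y, y ∂M.reward h s (π h s)

/-- Sample a random trajectory tree from the stochastic MDP `M`: draw a
start state `ŝ_1 ∼ μ`, independently a next state `ŝ(s,a) ∼ P_h(·|s,a)` for every
state-action pair of every non-final layer, and independently a reward
`r̂(s,a) ∼ R(s,a)` for every state-action pair of every layer; the sampling measure is
the product measure below.  Then the cumulative reward `v̂^π` of `π` on the sampled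
trajectory tree is an unbiased estimate of the value of `π` in `M`: `E[v̂^π] = V^π`. -/
theorem trajectoryTree_unbiased (H : ℕ) (hH : 1 ≤ H) (S : ℕ → Type) (A : Type)
    [∀ h, Fintype (S h)] [∀ h, Nonempty (S h)] [∀ h, MeasurableSpace (S h)]
    [∀ h, MeasurableSingletonClass (S h)] [Fintype A]
    (M : StoMDPR S A)
    [hprob : ∀ (h : ℕ) (s : S h) (a : A), IsProbabilityMeasure (M.reward h s a)]
    (hsupp : ∀ (h : ℕ) (s : S h) (a : A), (M.reward h s a) (Set.Icc (0 : ℝ) 1)ᶜ = 0)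
    (π : ∀ h : ℕ, S h → A) :
    ∫ ω : (S 0 × (∀ q : (h : Fin (H - 1)) × (S h.1 × A), S (q.1.1 + 1)))
            × (((h : Fin H) × (S h.1 × A)) → ℝ),
        treeValue H ω.1.1 ω.1.2 ω.2 π
      ∂((M.init.toMeasure.prod
            (Measure.pi fun q : (h : Fin (H - 1)) × (S h.1 × A) =>
              (M.step q.1.1 q.2.1 q.2.2).toMeasure)).prod
          (Measure.pi fun q : (h : Fin H) × (S h.1 × A) =>
            M.reward q.1.1 q.2.1 q.2.2)) =
      valueOf H M π :=
  trajectoryTree_unbiased_general H S A M (hprob := hprob) hsupp π
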